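/- Let λ > 0 and let (A_l)_{l ∈ ℤ} be a family of mutually independent {0,1}-valued random variables on a probability space with Pr{A_l = 1} = 1/(1 + e^{λ·2^l}) for every l ∈ ℤ. Then the series Σ_{l ∈ ℤ} 2^l · A_l converges almost surely, and the law of its sum is the exponential distribution with rate λ. -/

import Mathlib

/-!
Fix `N` and put `q = exp (-λ / 2 ^ N)`. The digits `A (j - N)`, `j < 2N`, are independent with
`P(A (j - N) = 1) = q ^ 2 ^ j / (1 + q ^ 2 ^ j)`, and since `∏ j < J, (1 + q ^ 2 ^ j)` telescopes to
`(1 - q ^ 2 ^ J) / (1 - q)`, the integer `K = ∑ j, 2 ^ j A (j - N)` is geometric with ratio `q`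
truncated to `[0, 2 ^ 2N)`. So `P(x < 2 ^ (-N) K)` is explicit and tends to `exp (-λ x)`.
The partial sums `2 ^ (-N) K` increase to the `[0, ∞]`-valued sum of the series, whose tail
is therefore exactly `exp (-λ x)`: letting `x → ∞` shows that the sum is a.s. finite, and the
tail identifies its law.
-/

open MeasureTheory ProbabilityTheory

open Finset Filter Topology Real
open scoped ENNReal

theorem one_sub_mul_prod_one_add_pow_two_pow {R : Type*} [CommRing R] (q : R) (J : ℕ) :
    (1 - q) * ∏ j ∈ range J, (1 + q ^ 2 ^ j) = 1 - q ^ 2 ^ J := by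
  induction J with
  | zero => simp
  | succ J ih => rw [prod_range_succ, ← mul_assoc, ih, pow_succ, pow_mul]; ring

section BinaryDigits

variable {J : ℕ}

/-- The number with binary digits `b 0, …, b (J - 1)`; a digit other than `1` is read as `0`. -/
noncomputable def ofBinaryDigits (b : Fin J → ℝ) : Fin (2 ^ J) :=
  finFunctionFinEquiv fun j => if b j = 1 then 1 else 0

lemma ofBinaryDigits_eq_iff {b : Fin J → ℝ} (hb : ∀ j, b j = 0 ∨ b j = 1) (n : Fin (2 ^ J)) :
    ofBinaryDigits b = n ↔ ∀ j, b j = (finFunctionFinEquiv.symm n j : ℕ) := by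
  rw [ofBinaryDigits, ← Equiv.eq_symm_apply, funext_iff]
  refine forall_congr' fun j => ?_
  generalize finFunctionFinEquiv.symm n j = d
  rcases hb j with h | h <;> fin_cases d <;> simp [h]

lemma ofBinaryDigits_val {b : Fin J → ℝ} (hb : ∀ j, b j = 0 ∨ b j = 1) :
    ((ofBinaryDigits b : ℕ) : ℝ) = ∑ j : Fin J, 2 ^ (j : ℕ) * b j := by
  rw [ofBinaryDigits, finFunctionFinEquiv_apply]
  push_cast
  refine sum_congr rfl fun j _ => ?_
  rcases hb j with h | h <;> simp [h]

variable {Ω : Type*} [MeasurableSpace Ω] {P : Measure Ω}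

lemma measure_eq_binaryDigit [IsProbabilityMeasure P] {X : Ω → ℝ} (hX : Measurable X)
    (h01 : ∀ ω, X ω = 0 ∨ X ω = 1) {p : ℝ} (hp : 0 ≤ p)
    (hprob : P {ω | X ω = 1} = ENNReal.ofReal (p / (1 + p))) (d : Fin 2) :
    P {ω | X ω = (d : ℕ)} = ENNReal.ofReal (p ^ (d : ℕ) / (1 + p)) := by
  fin_cases d
  · have hcompl : {ω | X ω = 0} = {ω | X ω = 1}ᶜ := by
      ext ω
      rcases h01 ω with h | h <;> simp [h]
    have hle : p / (1 + p) ≤ 1 := div_le_one_of_le₀ (by linarith) (by positivity)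
    simp only [Nat.cast_zero, pow_zero]
    rw [hcompl, prob_compl_eq_one_sub (measurableSet_eq_fun hX measurable_const), hprob,
      ← ENNReal.ofReal_one, ← ENNReal.ofReal_sub _ (by positivity)]
    congr 1
    field_simp
    ring
  · simpa using hprob

lemma measurable_ofBinaryDigits {B : Fin J → Ω → ℝ} (hmeas : ∀ j, Measurable (B j)) :
    Measurable fun ω => ofBinaryDigits (B · ω) :=
  (measurable_of_finite _).comp <| measurable_pi_lambda _ fun j =>
    Measurable.ite (hmeas j (measurableSet_singleton 1)) measurable_const measurable_const

theorem measure_ofBinaryDigits_eq [IsProbabilityMeasure P] {B : Fin J → Ω → ℝ}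
    (hmeas : ∀ j, Measurable (B j)) (h01 : ∀ j ω, B j ω = 0 ∨ B j ω = 1) (hindep : iIndepFun B P)
    {q : ℝ} (hq0 : 0 ≤ q) (hq1 : q ≠ 1)
    (hprob : ∀ j, P {ω | B j ω = 1} = ENNReal.ofReal (q ^ 2 ^ (j : ℕ) / (1 + q ^ 2 ^ (j : ℕ))))
    (n : Fin (2 ^ J)) :
    P {ω | ofBinaryDigits (B · ω) = n} =
      ENNReal.ofReal (q ^ (n : ℕ) * (1 - q) / (1 - q ^ 2 ^ J)) := by
  set d := finFunctionFinEquiv.symm n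
  have hset : {ω | ofBinaryDigits (B · ω) = n} = ⋂ j, B j ⁻¹' {((d j : ℕ) : ℝ)} := by
    ext ω
    simp [ofBinaryDigits_eq_iff (h01 · ω), d]
  rw [hset, hindep.meas_iInter fun j => ⟨_, measurableSet_singleton _, rfl⟩]
  simp only [Set.preimage, Set.mem_singleton_iff,
    measure_eq_binaryDigit (hmeas _) (h01 _) (by positivity) (hprob _)]
  rw [← ENNReal.ofReal_prod_of_nonneg fun j _ => by positivity, prod_div_distrib]
  congr 1
  have hnum : ∏ j : Fin J, (q ^ 2 ^ (j : ℕ)) ^ (d j : ℕ) = q ^ (n : ℕ) := by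
    simp only [← pow_mul, prod_pow_eq_pow_sum, mul_comm (2 ^ _)]
    rw [← finFunctionFinEquiv_apply, Equiv.apply_symm_apply]
  have hden := one_sub_mul_prod_one_add_pow_two_pow q J
  rw [← Fin.prod_univ_eq_prod_range (fun j => 1 + q ^ 2 ^ j)] at hden
  have hq : 1 - q ≠ 0 := sub_ne_zero.mpr hq1.symm
  rw [hnum, ← hden]
  field_simp

theorem measure_le_ofBinaryDigits [IsProbabilityMeasure P] {B : Fin J → Ω → ℝ}
    (hmeas : ∀ j, Measurable (B j)) (h01 : ∀ j ω, B j ω = 0 ∨ B j ω = 1) (hindep : iIndepFun B P)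
    {q : ℝ} (hq0 : 0 ≤ q) (hq1 : q < 1)
    (hprob : ∀ j, P {ω | B j ω = 1} = ENNReal.ofReal (q ^ 2 ^ (j : ℕ) / (1 + q ^ 2 ^ (j : ℕ))))
    (m : ℕ) :
    P {ω | m ≤ (ofBinaryDigits (B · ω) : ℕ)} =
      ENNReal.ofReal ((q ^ m - q ^ 2 ^ J) / (1 - q ^ 2 ^ J)) := by
  set K : Ω → ℕ := fun ω => ofBinaryDigits (B · ω)
  have hK : Measurable K := measurable_from_top.comp (measurable_ofBinaryDigits hmeas)
  have hqJ : q ^ 2 ^ J < 1 := pow_lt_one₀ hq0 hq1 (by positivity)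
  have hatom : ∀ n ∈ Ico m (2 ^ J),
      P (K ⁻¹' {n}) = ENNReal.ofReal (q ^ n * (1 - q) / (1 - q ^ 2 ^ J)) := fun n hn => by
    convert measure_ofBinaryDigits_eq hmeas h01 hindep hq0 hq1.ne hprob ⟨n, (mem_Ico.mp hn).2⟩
      using 2
    ext ω
    simp [K, Fin.ext_iff]
  calc P {ω | m ≤ K ω} = P (K ⁻¹' ↑(Ico m (2 ^ J))) := by
        congr 1
        ext ω
        simp [K]
    _ = ∑ n ∈ Ico m (2 ^ J), ENNReal.ofReal (q ^ n * (1 - q) / (1 - q ^ 2 ^ J)) := by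
        rw [← sum_measure_preimage_singleton _ fun n _ => hK (measurableSet_singleton n)]
        exact sum_congr rfl hatom
    _ = ENNReal.ofReal ((q ^ m - q ^ 2 ^ J) / (1 - q ^ 2 ^ J)) := by
        rw [← ENNReal.ofReal_sum_of_nonneg fun n _ => div_nonneg (by nlinarith [pow_nonneg hq0 n])
          (by linarith)]
        rcases le_or_gt m (2 ^ J) with hm | hm
        · rw [← sum_div, ← sum_mul, geom_sum_Ico hq1.ne hm]
          congr 1
          have : q - 1 ≠ 0 := by linarith
          field_simp
          ring
        · rw [Ico_eq_empty_of_le hm.le, sum_empty, ENNReal.ofReal_zero, eq_comm,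
            ENNReal.ofReal_eq_zero]
          exact div_nonpos_of_nonpos_of_nonneg
            (sub_nonpos.mpr (pow_le_pow_of_le_one hq0 hq1.le hm.le)) (by linarith)

end BinaryDigits

lemma sum_Ico_two_zpow_mul_eq_ofBinaryDigits {a : ℤ → ℝ} (ha : ∀ l, a l = 0 ∨ a l = 1) (N : ℕ) :
    ∑ l ∈ Ico (-(N : ℤ)) N, (2 : ℝ) ^ l * a l =
      (ofBinaryDigits fun j : Fin (2 * N) => a (j - N) : ℕ) / 2 ^ N := by
  rw [ofBinaryDigits_val fun j => ha _, sum_div, eq_comm]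
  refine sum_bij (fun j _ => (j : ℤ) - N) ?_ ?_ ?_ ?_
  · intro j _
    simp only [mem_Ico]
    omega
  · intro i _ j _ h
    ext
    simpa using h
  · intro l hl
    rw [mem_Ico] at hl
    exact ⟨⟨(l + N).toNat, by omega⟩, mem_univ _, by dsimp only; omega⟩
  · intro j _
    rw [zpow_sub₀ two_ne_zero, zpow_natCast, zpow_natCast]
    ring

lemma one_div_one_add_exp (y : ℝ) : 1 / (1 + exp y) = exp (-y) / (1 + exp (-y)) := by
  rw [exp_neg]
  field_simp
  ring

section DyadicDigits

variable {Ω : Type*} [MeasurableSpace Ω] {P : Measure Ω}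

theorem measure_lt_sum_Ico_two_zpow_mul [IsProbabilityMeasure P] {lam : ℝ} (hlam : 0 < lam)
    {A : ℤ → Ω → ℝ} (hmeas : ∀ l, Measurable (A l)) (h01 : ∀ l ω, A l ω = 0 ∨ A l ω = 1)
    (hindep : iIndepFun A P)
    (hprob : ∀ l : ℤ, P {ω | A l ω = 1} = ENNReal.ofReal (1 / (1 + exp (lam * 2 ^ l))))
    {x : ℝ} (hx : 0 ≤ x) (N : ℕ) :
    P {ω | x < ∑ l ∈ Ico (-(N : ℤ)) N, (2 : ℝ) ^ l * A l ω} =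
      ENNReal.ofReal ((exp (-(lam * ((⌊2 ^ N * x⌋₊ + 1) / 2 ^ N))) - exp (-(lam * 2 ^ N))) /
        (1 - exp (-(lam * 2 ^ N)))) := by
  set q := exp (-(lam / 2 ^ N))
  have hq1 : q < 1 := Real.exp_lt_one_iff.mpr (neg_lt_zero.mpr (by positivity))
  have hq_pow : ∀ k : ℕ, q ^ k = exp (-(lam * (k / 2 ^ N))) := fun k => by
    rw [← exp_nat_mul]
    ring_nf
  have hset : {ω | x < ∑ l ∈ Ico (-(N : ℤ)) N, (2 : ℝ) ^ l * A l ω} =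
      {ω | ⌊2 ^ N * x⌋₊ + 1 ≤ (ofBinaryDigits fun j : Fin (2 * N) => A (j - N) ω : ℕ)} := by
    ext ω
    rw [Set.mem_ofPred_eq, Set.mem_ofPred_eq, sum_Ico_two_zpow_mul_eq_ofBinaryDigits (h01 · ω),
      lt_div_iff₀ (by positivity), Nat.add_one_le_iff, Nat.floor_lt (by positivity), mul_comm]
  have hindep' : iIndepFun (fun j : Fin (2 * N) => A (j - N)) P :=
    hindep.precomp (sub_left_injective.comp (Nat.cast_injective.comp Fin.val_injective))
  rw [hset, measure_le_ofBinaryDigits (fun j => hmeas _) (fun j ω => h01 _ ω) hindep'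
    (exp_nonneg _) hq1 ?_, hq_pow, hq_pow]
  · push_cast
    rw [pow_mul, sq, mul_pow, mul_div_cancel_right₀ _ (pow_ne_zero _ two_ne_zero)]
  · intro j
    rw [hprob, one_div_one_add_exp, hq_pow, zpow_sub₀ two_ne_zero, zpow_natCast, zpow_natCast]
    push_cast
    ring_nf

theorem tendsto_measure_lt_sum_Ico {a : ℤ → Ω → ℝ} (ha : ∀ l ω, 0 ≤ a l ω) {x : ℝ} (hx : 0 ≤ x) :
    Tendsto (fun N : ℕ => P {ω | x < ∑ l ∈ Ico (-(N : ℤ)) N, a l ω}) atTop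
      (𝓝 (P {ω | ENNReal.ofReal x < ∑' l, ENNReal.ofReal (a l ω)})) := by
  have hcofinal : ∀ t : Finset ℤ, ∃ N : ℕ, t ⊆ Ico (-(N : ℤ)) N := fun t =>
    ⟨t.sup Int.natAbs + 1, fun l hl => by
      have := le_sup (f := Int.natAbs) hl
      rw [mem_Ico]
      omega⟩
  have hmono : Monotone fun N : ℕ => {ω | x < ∑ l ∈ Ico (-(N : ℤ)) N, a l ω} :=
    fun N M hNM ω hω => hω.trans_le <| sum_le_sum_of_subset_of_nonneg
      (Ico_subset_Ico (by omega) (by omega)) fun l _ _ => ha l ω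
  have hunion : {ω | ENNReal.ofReal x < ∑' l, ENNReal.ofReal (a l ω)} =
      ⋃ N : ℕ, {ω | x < ∑ l ∈ Ico (-(N : ℤ)) N, a l ω} := by
    ext ω
    simp only [Set.mem_ofPred_eq, Set.mem_iUnion, ENNReal.tsum_eq_iSup_sum' _ hcofinal,
      lt_iSup_iff, ← ENNReal.ofReal_sum_of_nonneg fun l _ => ha l ω,
      ENNReal.ofReal_lt_ofReal_iff_of_nonneg hx]
  rw [hunion]
  exact tendsto_measure_iUnion_atTop hmono

end DyadicDigits

theorem tendsto_truncated_exp_tail {lam x : ℝ} (hlam : 0 < lam) (hx : 0 ≤ x) :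
    Tendsto (fun N : ℕ => ENNReal.ofReal ((exp (-(lam * ((⌊2 ^ N * x⌋₊ + 1) / 2 ^ N))) -
        exp (-(lam * 2 ^ N))) / (1 - exp (-(lam * 2 ^ N))))) atTop
      (𝓝 (ENNReal.ofReal (exp (-(lam * x))))) := by
  have hpow : Tendsto (fun N : ℕ => (2 : ℝ) ^ N) atTop atTop :=
    tendsto_pow_atTop_atTop_of_one_lt one_lt_two
  have hgrid : Tendsto (fun N : ℕ => ((⌊2 ^ N * x⌋₊ : ℝ) + 1) / 2 ^ N) atTop (𝓝 x) := by
    have := ((tendsto_nat_floor_mul_div_atTop hx).comp hpow).add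
      (tendsto_inv_atTop_zero.comp hpow)
    simpa [add_div, mul_comm] using this
  have hvanish : Tendsto (fun N : ℕ => exp (-(lam * 2 ^ N))) atTop (𝓝 0) :=
    tendsto_exp_atBot.comp (tendsto_neg_atTop_atBot.comp (hpow.const_mul_atTop hlam))
  have hden : Tendsto (fun N : ℕ => 1 - exp (-(lam * 2 ^ N))) atTop (𝓝 (1 - 0)) :=
    tendsto_const_nhds.sub hvanish
  have := (((hgrid.const_mul lam).neg.rexp).sub hvanish).div hden (by norm_num)
  rw [sub_zero, sub_zero, div_one] at this
  exact (ENNReal.continuous_ofReal.tendsto _).comp this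

section ExponentialTail

variable {Ω : Type*} [MeasurableSpace Ω] {P : Measure Ω} {Y : Ω → ℝ≥0∞} {lam : ℝ}

theorem ae_ne_top_of_measure_lt_eq_exp (hlam : 0 < lam)
    (htail : ∀ x, 0 ≤ x → P {ω | ENNReal.ofReal x < Y ω} = ENNReal.ofReal (exp (-(lam * x)))) :
    ∀ᵐ ω ∂P, Y ω ≠ ⊤ := by
  have hlim : Tendsto (fun n : ℕ => ENNReal.ofReal (exp (-(lam * n)))) atTop (𝓝 0) := by
    rw [← ENNReal.ofReal_zero]
    exact ENNReal.tendsto_ofReal <| tendsto_exp_atBot.comp <|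
      tendsto_neg_atTop_atBot.comp (tendsto_natCast_atTop_atTop.const_mul_atTop hlam)
  refine ae_iff.mpr (le_antisymm (ge_of_tendsto' hlim fun n => ?_) bot_le)
  rw [← htail n n.cast_nonneg]
  exact measure_mono fun ω hω => by simp_all

theorem map_toReal_eq_expMeasure [IsProbabilityMeasure P] (hY : Measurable Y) (hlam : 0 < lam)
    (htail : ∀ x, 0 ≤ x → P {ω | ENNReal.ofReal x < Y ω} = ENNReal.ofReal (exp (-(lam * x)))) :
    P.map (fun ω => (Y ω).toReal) = expMeasure lam := by
  have hX : Measurable fun ω => (Y ω).toReal := hY.ennreal_toReal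
  have := isProbabilityMeasure_expMeasure hlam
  have := Measure.isProbabilityMeasure_map (μ := P) hX.aemeasurable
  refine Measure.eq_of_cdf _ _ (StieltjesFunction.ext fun x => ?_)
  rw [cdf_expMeasure_eq hlam, cdf_eq_real, map_measureReal_apply hX measurableSet_Iic]
  split_ifs with hx
  · have hae : (fun ω => (Y ω).toReal) ⁻¹' Set.Iic x =ᵐ[P]
        ({ω | ENNReal.ofReal x < Y ω}ᶜ : Set Ω) := by
      refine eventuallyEq_set.mpr ?_
      filter_upwards [ae_ne_top_of_measure_lt_eq_exp hlam htail] with ω hω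
      simp [← ENNReal.le_ofReal_iff_toReal_le hω hx]
    rw [measureReal_congr hae, probReal_compl_eq_one_sub (measurableSet_lt measurable_const hY),
      measureReal_def, htail x hx, ENNReal.toReal_ofReal (exp_nonneg _)]
  · convert measureReal_empty (μ := P)
    ext ω
    simp only [Set.mem_preimage, Set.mem_Iic, Set.mem_empty_iff_false, iff_false, not_le]
    exact (not_le.mp hx).trans_le ENNReal.toReal_nonneg

end ExponentialTail

theorem binary_expansion_of_exponential_if
    {Ω : Type*} [MeasurableSpace Ω] (P : Measure Ω) [IsProbabilityMeasure P]
    (lam : ℝ) (hlam : 0 < lam) (A : ℤ → Ω → ℝ)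
    (hmeas : ∀ l : ℤ, Measurable (A l))
    (h01 : ∀ (l : ℤ) (ω : Ω), A l ω = 0 ∨ A l ω = 1)
    (hindep : iIndepFun A P)
    (hprob : ∀ l : ℤ,
      P {ω | A l ω = 1} = ENNReal.ofReal (1 / (1 + Real.exp (lam * 2 ^ l)))) :
    (∀ᵐ ω ∂P, Summable fun l : ℤ => (2 : ℝ) ^ l * A l ω) ∧
      P.map (fun ω => ∑' l : ℤ, (2 : ℝ) ^ l * A l ω) = expMeasure lam := by
  have hnonneg : ∀ l ω, 0 ≤ (2 : ℝ) ^ l * A l ω := fun l ω => by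
    rcases h01 l ω with h | h <;> simp [h, zpow_nonneg]
  set Y : Ω → ℝ≥0∞ := fun ω => ∑' l : ℤ, ENNReal.ofReal ((2 : ℝ) ^ l * A l ω)
  have hY : Measurable Y :=
    Measurable.tsum fun l => ((hmeas l).const_mul _).ennreal_ofReal
  have htail : ∀ x, 0 ≤ x → P {ω | ENNReal.ofReal x < Y ω} = ENNReal.ofReal (exp (-(lam * x))) :=
    fun x hx => tendsto_nhds_unique (tendsto_measure_lt_sum_Ico hnonneg hx) <| by
      simpa only [measure_lt_sum_Ico_two_zpow_mul hlam hmeas h01 hindep hprob hx]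
        using tendsto_truncated_exp_tail hlam hx
  have hsum : ∀ ω, ∑' l : ℤ, (2 : ℝ) ^ l * A l ω = (Y ω).toReal := fun ω => by
    simp only [Y, ENNReal.tsum_toReal_eq fun _ => ENNReal.ofReal_ne_top,
      ENNReal.toReal_ofReal (hnonneg _ ω)]
  refine ⟨(ae_ne_top_of_measure_lt_eq_exp hlam htail).mono fun ω hω => ?_, ?_⟩
  · simpa only [ENNReal.toReal_ofReal (hnonneg _ ω)] using ENNReal.summable_toReal hω
  · simp_rw [hsum]
    exact map_toReal_eq_expMeasure hY hlam htail
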